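/- For every n ≥ 0 the polynomial identity Σ_{j=0}^{n} φ(j)·d_{n−j}(v) = φ(n)·(1 + v + v² + ⋯ + v^{2n}) holds in ℝ[v]. -/

import Mathlib

/-!
Convolving the recursion for `d` with `φ` eliminates `m`: by induction on the recursion for `m`,
`Σ_{i+j=n} φ(i) m(j) = φ(n+1) = (2n+1) φ(n)`, and with this the sums `s_n = Σ_{i+j=n} φ(i) d_j`
satisfy the first-order recursion `s_{n+1} = φ(n+1) + (v² + (2n+1) v) s_n − v²(1−v) s_n'`.
Because `(1−v)(1 + v + ⋯ + v^{2n}) = 1 − v^{2n+1}`, the polynomials `φ(n)(1 + v + ⋯ + v^{2n})`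
satisfy the same recursion, and both sequences start at `1`.
-/

open Polynomial

/-- `φ(n) = (2n−1)!! = (2n)!/(2^n·n!)` (the division is exact). -/
def phi (n : ℕ) : ℕ := (2 * n).factorial / (2 ^ n * n.factorial)

open Finset Nat

lemma phi_succ_eq_doubleFactorial (n : ℕ) : phi (n + 1) = (2 * n + 1)‼ := by
  rw [phi, show 2 * (n + 1) = 2 * n + 1 + 1 by ring, factorial_eq_mul_doubleFactorial,
    show 2 * n + 1 + 1 = 2 * (n + 1) by ring, doubleFactorial_two_mul,
    Nat.mul_div_cancel_left _ (by positivity)]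

lemma phi_succ (n : ℕ) : phi (n + 1) = (2 * n + 1) * phi n := by
  cases n with
  | zero => rfl
  | succ n =>
    rw [phi_succ_eq_doubleFactorial, phi_succ_eq_doubleFactorial,
      show 2 * (n + 1) + 1 = 2 * n + 1 + 2 by ring, doubleFactorial_add_two]

lemma Finset.Nat.sum_antidiagonal_mul_sum_antidiagonal {R : Type*} [CommSemiring R]
    (f g h : ℕ → R) (n : ℕ) :
    ∑ p ∈ antidiagonal n, f p.1 * ∑ q ∈ antidiagonal p.2, g q.1 * h q.2 =
      ∑ p ∈ antidiagonal n, (∑ q ∈ antidiagonal p.1, f q.1 * g q.2) * h p.2 := by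
  simpa only [PowerSeries.coeff_mul, PowerSeries.coeff_mk] using
    congrArg (PowerSeries.coeff n)
      (mul_assoc (PowerSeries.mk f) (PowerSeries.mk g) (PowerSeries.mk h)).symm

lemma sum_antidiagonal_phi_mul_eq_phi_succ (m : ℕ → ℕ) (hm0 : m 0 = 1)
    (hm : ∀ n : ℕ, m (n + 1) =
      (∑ k ∈ range (n + 1), m k * m (n - k)) + (2 * (n + 1) - 1) * m n) (n : ℕ) :
    ∑ p ∈ antidiagonal n, phi p.1 * m p.2 = phi (n + 1) := by
  induction n using Nat.strong_induction_on with
  | _ n ih =>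
    cases n with
    | zero => simp [hm0, phi]
    | succ n =>
      have hm_succ (k : ℕ) :
          m (k + 1) = ∑ q ∈ antidiagonal k, m q.1 * m q.2 + (2 * k + 1) * m k := by
        rw [hm k, sum_antidiagonal_eq_sum_range_succ (fun i j => m i * m j),
          show 2 * (k + 1) - 1 = 2 * k + 1 by omega]
      have hquad : ∑ p ∈ antidiagonal n, phi p.1 * ∑ q ∈ antidiagonal p.2, m q.1 * m q.2 =
          ∑ p ∈ antidiagonal n, (2 * p.1 + 1) * phi p.1 * m p.2 := by
        rw [sum_antidiagonal_mul_sum_antidiagonal]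
        refine sum_congr rfl fun p hp => ?_
        rw [ih p.1 (by have := mem_antidiagonal.1 hp; omega), phi_succ]
      have hweight : ∀ p ∈ antidiagonal n, (2 * p.1 + 1) * phi p.1 * m p.2 +
          phi p.1 * ((2 * p.2 + 1) * m p.2) = (2 * n + 2) * (phi p.1 * m p.2) := by
        intro p hp
        rw [← mem_antidiagonal.1 hp]
        ring
      calc ∑ p ∈ antidiagonal (n + 1), phi p.1 * m p.2
          = phi (n + 1) * m 0 + ∑ p ∈ antidiagonal n, phi p.1 * m (p.2 + 1) :=
            sum_antidiagonal_succ'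
        _ = phi (n + 1) + ∑ p ∈ antidiagonal n,
              ((2 * p.1 + 1) * phi p.1 * m p.2 + phi p.1 * ((2 * p.2 + 1) * m p.2)) := by
            simp only [hm_succ, hm0, mul_one, mul_add, sum_add_distrib, hquad]
        _ = phi (n + 1) + (2 * n + 2) * ∑ p ∈ antidiagonal n, phi p.1 * m p.2 := by
            rw [sum_congr rfl hweight, mul_sum]
        _ = phi (n + 2) := by rw [ih n n.lt_succ_self, phi_succ (n + 1)]; ring

section Polynomial

variable {R : Type*} [CommRing R]

lemma one_sub_X_mul_derivative_geom_sum (N : ℕ) :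
    (1 - X) * derivative (∑ i ∈ range (N + 1), (X : R[X]) ^ i) =
      ∑ i ∈ range (N + 1), X ^ i - C ((N : R) + 1) * X ^ N := by
  have h := congrArg derivative (mul_neg_geom_sum (X : R[X]) (N + 1))
  simp only [derivative_mul, derivative_sub, derivative_one, derivative_X, derivative_X_pow,
    Nat.add_sub_cancel, Nat.cast_add, Nat.cast_one] at h
  linear_combination h

lemma phi_mul_geom_sum_succ (n : ℕ) :
    C (phi (n + 1) : R) * ∑ k ∈ range (2 * (n + 1) + 1), X ^ k =
      C (phi (n + 1) : R) + (X ^ 2 + C (2 * (n : R) + 1) * X) *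
          (C (phi n : R) * ∑ k ∈ range (2 * n + 1), X ^ k) -
        X ^ 2 * (1 - X) * derivative (C (phi n : R) * ∑ k ∈ range (2 * n + 1), X ^ k) := by
  have hderiv := one_sub_X_mul_derivative_geom_sum (R := R) (2 * n)
  have hsplit : ∑ k ∈ range (2 * (n + 1) + 1), (X : R[X]) ^ k =
      1 + X * ∑ k ∈ range (2 * n + 1), X ^ k + X ^ (2 * n + 2) := by
    rw [show 2 * (n + 1) + 1 = 2 * n + 1 + 1 + 1 by ring, sum_range_succ', sum_range_succ]
    simp only [pow_succ' X, ← mul_sum]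
    ring
  push_cast at hderiv
  rw [derivative_C_mul, hsplit, phi_succ, Nat.cast_mul, map_mul]
  push_cast
  linear_combination X ^ 2 * C (phi n : R) * hderiv

lemma sum_antidiagonal_phi_mul_succ {m : ℕ → ℕ}
    (hconv : ∀ n, ∑ p ∈ antidiagonal n, phi p.1 * m p.2 = phi (n + 1)) {d : ℕ → R[X]}
    (hd : ∀ n : ℕ, d (n + 1) =
      X ^ 2 * d n + C (2 * (n : R)) * X * d n +
        X * (∑ i ∈ range (n + 1), C ((m i : R)) * d (n - i)) -
        X ^ 2 * (1 - X) * derivative (d n)) (n : ℕ) :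
    ∑ p ∈ antidiagonal (n + 1), C (phi p.1 : R) * d p.2 =
      C (phi (n + 1) : R) * d 0 +
          (X ^ 2 + C (2 * (n : R) + 1) * X) * ∑ p ∈ antidiagonal n, C (phi p.1 : R) * d p.2 -
        X ^ 2 * (1 - X) * derivative (∑ p ∈ antidiagonal n, C (phi p.1 : R) * d p.2) := by
  have hconvC (c : ℕ) : ∑ q ∈ antidiagonal c, C (phi q.1 : R) * C (m q.2 : R) =
      C ((2 * c + 1 : R) * phi c) := by
    simp only [← map_mul, ← map_sum, ← Nat.cast_mul, ← Nat.cast_sum, hconv, phi_succ]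
    push_cast
    rfl
  have hinner : ∑ p ∈ antidiagonal n,
        C (phi p.1 : R) * ∑ q ∈ antidiagonal p.2, C (m q.1 : R) * d q.2 =
      ∑ p ∈ antidiagonal n, C ((2 * p.1 + 1 : R) * phi p.1) * d p.2 := by
    rw [sum_antidiagonal_mul_sum_antidiagonal (fun i => C (phi i : R)) (fun i => C (m i : R)) d]
    simp only [hconvC]
  have hstep : ∀ p ∈ antidiagonal n, C (phi p.1 : R) * d (p.2 + 1) =
      X ^ 2 * (C (phi p.1 : R) * d p.2) +
        X * (C (2 * (p.2 : R)) * (C (phi p.1 : R) * d p.2) +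
          C (phi p.1 : R) * ∑ q ∈ antidiagonal p.2, C (m q.1 : R) * d q.2) -
        X ^ 2 * (1 - X) * derivative (C (phi p.1 : R) * d p.2) := by
    intro p _
    rw [hd, ← sum_antidiagonal_eq_sum_range_succ (fun i j => C (m i : R) * d j),
      derivative_C_mul]
    ring
  have hweight : ∀ p ∈ antidiagonal n,
      C (2 * (p.2 : R)) * (C (phi p.1 : R) * d p.2) + C ((2 * p.1 + 1 : R) * phi p.1) * d p.2 =
        C (2 * (n : R) + 1) * (C (phi p.1 : R) * d p.2) := by
    intro p hp
    rw [← mem_antidiagonal.1 hp]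
    simp only [map_mul, map_add, map_natCast, map_ofNat, map_one, Nat.cast_add]
    ring
  rw [sum_antidiagonal_succ', sum_congr rfl hstep, sum_sub_distrib, sum_add_distrib, ← mul_sum,
    ← mul_sum, ← mul_sum, ← derivative_sum, sum_add_distrib, hinner, ← sum_add_distrib,
    sum_congr rfl hweight, ← mul_sum]
  ring

end Polynomial

/-- For every `n ≥ 0` the polynomial identity
`Σ_{j=0}^{n} φ(j)·d_{n−j}(v) = φ(n)·(1 + v + v² + ⋯ + v^{2n})` holds in `ℝ[v]`. -/
theorem root_degree_convolution_identity
    (m : ℕ → ℕ) (hm0 : m 0 = 1)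
    (hm : ∀ n : ℕ, m (n + 1) =
      (∑ k ∈ Finset.range (n + 1), m k * m (n - k)) + (2 * (n + 1) - 1) * m n)
    (d : ℕ → Polynomial ℝ) (hd0 : d 0 = 1)
    (hd : ∀ n : ℕ, d (n + 1) =
      X ^ 2 * d n + C (2 * (n : ℝ)) * X * d n +
        X * (∑ i ∈ Finset.range (n + 1), C ((m i : ℝ)) * d (n - i)) -
        X ^ 2 * (1 - X) * derivative (d n)) :
    ∀ n : ℕ,
      (∑ j ∈ Finset.range (n + 1), C ((phi j : ℝ)) * d (n - j)) =
        C ((phi n : ℝ)) * ∑ k ∈ Finset.range (2 * n + 1), X ^ k := by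
  have hconv := sum_antidiagonal_phi_mul_eq_phi_succ m hm0 hm
  intro n
  rw [← sum_antidiagonal_eq_sum_range_succ (fun j k => C (phi j : ℝ) * d k)]
  induction n with
  | zero => simp [hd0, phi]
  | succ n ih =>
    rw [sum_antidiagonal_phi_mul_succ hconv hd, ih, hd0, mul_one, phi_mul_geom_sum_succ]
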